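/- Let p > 3 be prime, E : y² = x³ + Ax + B nonsingular over 𝔽_p, G, W₀ ∈ E(𝔽_p), W_n = nG ⊕ W₀, x_n = x(W_n), with W_n ≠ ±G for n = 1,…,6, W_n ≠ 𝒪 for n = 1,…,7, and x₁,…,x₇ pairwise distinct. Then the rank over 𝔽_p of the 5×6 matrix C with rows (2x_i² + 2x_i(x_{i−1}+x_{i+1}), 2x_i − (x_{i−1}+x_{i+1}), 2x_i, 2, 2, −2), i = 2,…,6, is exactly 4. -/

import Mathlib

/-- The elliptic curve `y² = x³ + Ax + B` in affine Weierstrass form. -/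
def Ecurve {k : Type*} [CommRing k] (A B : k) : WeierstrassCurve.Affine k :=
  { a₁ := 0, a₂ := 0, a₃ := 0, a₄ := A, a₆ := B }

/-- The x-coordinate of a nonsingular point, with the convention `x(𝒪) = 0`. -/
def xcoord {k : Type*} [Field k] {W : WeierstrassCurve.Affine k} : W.Point → k
  | .zero => 0
  | @WeierstrassCurve.Affine.Point.some _ _ _ x _ _ => x

/-!
Write `g = x(G)`. Since `W_{n ± 1} = W_n ± G` with `x_n ≠ g`, the addition law gives
`(x_n - g)² (x_{n-1} + x_{n+1}) = 2 ((x_n g + A)(x_n + g) + 2B)`. Multiplying a linear relation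
`v` among the first four columns of `C` by `(x_n - g)²` and eliminating `x_{n-1} + x_{n+1}` this
way leaves a polynomial of degree at most 4 in `x_n` that vanishes at the five distinct points
`x_2, …, x_6`. Its coefficients therefore vanish, which forces `v = 0` unless `g` is a double root
of `X³ + AX + B`, excluded by the discriminant. The last three columns are multiples of the fourth.
-/

open WeierstrassCurve.Affine

section Curve

variable {F : Type*} [Field F]

@[simp]
lemma xcoord_some {W : WeierstrassCurve.Affine F} {x y : F} (h : W.Nonsingular x y) :
    xcoord (Point.some x y h) = x :=
  rfl

lemma xcoord_ne_of_ne_of_ne_neg [DecidableEq F] {W : WeierstrassCurve.Affine F} {P Q : W.Point}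
    (hP : P ≠ 0) (hQ : Q ≠ 0) (hPQ : P ≠ Q) (hPQ' : P ≠ -Q) : xcoord P ≠ xcoord Q := by
  rcases P with _ | @⟨x₁, y₁, h₁⟩
  · exact absurd rfl hP
  rcases Q with _ | @⟨x₂, y₂, h₂⟩
  · exact absurd rfl hQ
  intro hx
  simp only [xcoord_some] at hx
  rcases Y_eq_of_X_eq h₁.1 h₂.1 hx with hy | hy
  · exact hPQ (by subst hx hy; rfl)
  · exact hPQ' (by rw [Point.neg_some]; subst hx hy; rfl)

lemma Ecurve_equation_iff {A B x y : F} :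
    (Ecurve A B).Equation x y ↔ y ^ 2 = x ^ 3 + A * x + B := by
  rw [equation_iff]
  simp [Ecurve]

lemma xcoord_add_add_xcoord_sub [DecidableEq F] {A B : F} {P Q : (Ecurve A B).Point}
    (hP : P ≠ 0) (hQ : Q ≠ 0) (hx : xcoord P ≠ xcoord Q) :
    (xcoord P - xcoord Q) ^ 2 * (xcoord (P + Q) + xcoord (P - Q)) =
      2 * ((xcoord P * xcoord Q + A) * (xcoord P + xcoord Q) + 2 * B) := by
  rcases P with _ | @⟨x₁, y₁, h₁⟩
  · exact absurd rfl hP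
  rcases Q with _ | @⟨x₂, y₂, h₂⟩
  · exact absurd rfl hQ
  simp only [xcoord_some] at hx ⊢
  have e₁ := Ecurve_equation_iff.mp h₁.1
  have e₂ := Ecurve_equation_iff.mp h₂.1
  rw [sub_eq_add_neg (Point.some _ _ h₁), Point.neg_some, Point.add_of_X_ne hx,
    Point.add_of_X_ne hx]
  simp only [xcoord_some, addX, slope_of_X_ne hx, negY, Ecurve]
  have hne : x₁ - x₂ ≠ 0 := sub_ne_zero.mpr hx
  field_simp
  linear_combination 2 * e₁ + 2 * e₂

end Curve

section RankFour

variable {F : Type*} [Field F]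

/-- Coefficients of `(X - g)² (v₀X² + (v₁ + v₂)X + v₃) + ((gX + A)(X + g) + 2B)(2v₀X - v₁)`. -/
def quarticCoeffs (A B g : F) (v : Fin 4 → F) : Fin 5 → F :=
  ![-(A * g + 2 * B) * v 1 + g ^ 2 * v 3,
    (2 * A * g + 4 * B) * v 0 - A * v 1 + g ^ 2 * v 2 - 2 * g * v 3,
    (3 * g ^ 2 + 2 * A) * v 0 - 3 * g * v 1 - 2 * g * v 2 + v 3,
    v 1 + v 2,
    v 0]

lemma sum_quarticCoeffs_mul_pow_eq_zero (h2 : (2 : F) ≠ 0) {A B g x s : F} {v : Fin 4 → F}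
    (hs : (x - g) ^ 2 * s = 2 * ((x * g + A) * (x + g) + 2 * B))
    (hrow : (2 * x ^ 2 + 2 * x * s) * v 0 + (2 * x - s) * v 1 + 2 * x * v 2 + 2 * v 3 = 0) :
    ∑ j, quarticCoeffs A B g v j * x ^ (j : ℕ) = 0 := by
  have h : 2 * ∑ j, quarticCoeffs A B g v j * x ^ (j : ℕ) = 0 := by
    simp only [Fin.sum_univ_five, quarticCoeffs, Matrix.cons_val, Fin.coe_ofNat_eq_mod,
      Nat.reduceMod]
    linear_combination (x - g) ^ 2 * hrow + (v 1 - 2 * x * v 0) * hs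
  exact (mul_eq_zero.mp h).resolve_left h2

lemma eq_zero_of_quarticCoeffs_eq_zero (h2 : (2 : F) ≠ 0) {A B g : F}
    (hΔ : 4 * A ^ 3 + 27 * B ^ 2 ≠ 0) {v : Fin 4 → F} (hv : quarticCoeffs A B g v = 0) :
    v = 0 := by
  have e0 := congrFun hv 0
  have e1 := congrFun hv 1
  have e2 := congrFun hv 2
  have e3 := congrFun hv 3
  have e4 := congrFun hv 4
  simp only [quarticCoeffs, Matrix.cons_val, Pi.zero_apply] at e0 e1 e2 e3 e4
  have hv3 : v 3 = g * v 1 := by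
    linear_combination e2 - (3 * g ^ 2 + 2 * A) * e4 + 2 * g * e3
  have ha : (A + 3 * g ^ 2) * v 1 = 0 := by
    linear_combination -e1 + (2 * A * g + 4 * B) * e4 + g ^ 2 * e3 - 2 * g * hv3
  have hb : (g ^ 3 - A * g - 2 * B) * v 1 = 0 := by linear_combination e0 - g ^ 2 * hv3
  -- Otherwise `A = -3g²` and `B = 2g³`: `g` is a double root of `X³ + AX + B`.
  have hv1 : v 1 = 0 := by
    by_contra hv1
    have hA : A = -3 * g ^ 2 := by
      linear_combination (mul_eq_zero.mp ha).resolve_right hv1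
    have hB : 2 * B = 4 * g ^ 3 := by
      linear_combination -(mul_eq_zero.mp hb).resolve_right hv1 - g * hA
    have h4 : (4 : F) ≠ 0 := by
      rw [show (4 : F) = 2 * 2 by norm_num]
      exact mul_ne_zero h2 h2
    apply hΔ
    apply mul_left_cancel₀ h4
    linear_combination 16 * (A ^ 2 - 3 * g ^ 2 * A + 9 * g ^ 4) * hA + 27 * (2 * B + 4 * g ^ 3) * hB
  ext j
  fin_cases j
  · exact e4
  · exact hv1
  · simpa [hv1] using e3
  · simpa [hv1] using hv3

def relationMatrix (x s : Fin 5 → F) : Matrix (Fin 5) (Fin 4) F :=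
  Matrix.of fun i => ![2 * x i ^ 2 + 2 * x i * s i, 2 * x i - s i, 2 * x i, 2]

variable {A B g : F} {x s : Fin 5 → F}

lemma relationMatrix_mulVec_injective (h2 : (2 : F) ≠ 0) (hΔ : 4 * A ^ 3 + 27 * B ^ 2 ≠ 0)
    (hx : Function.Injective x)
    (hs : ∀ i, (x i - g) ^ 2 * s i = 2 * ((x i * g + A) * (x i + g) + 2 * B)) :
    Function.Injective (relationMatrix x s).mulVec := by
  suffices h : ∀ v, (relationMatrix x s).mulVec v = 0 → v = 0 from
    fun v w hvw => sub_eq_zero.mp (h _ (by rw [Matrix.mulVec_sub, hvw, sub_self]))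
  intro v hv
  refine eq_zero_of_quarticCoeffs_eq_zero (g := g) h2 hΔ
    (Matrix.eq_zero_of_forall_index_sum_mul_pow_eq_zero hx fun i => ?_)
  refine sum_quarticCoeffs_mul_pow_eq_zero h2 (hs i) ?_
  simpa [relationMatrix, Matrix.mulVec, dotProduct, Fin.sum_univ_four, add_assoc]
    using congrFun hv i

lemma rank_relationMatrix (h2 : (2 : F) ≠ 0) (hΔ : 4 * A ^ 3 + 27 * B ^ 2 ≠ 0)
    (hx : Function.Injective x)
    (hs : ∀ i, (x i - g) ^ 2 * s i = 2 * ((x i * g + A) * (x i + g) + 2 * B)) :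
    (relationMatrix x s).rank = 4 := by
  rw [Matrix.rank, LinearMap.finrank_range_of_inj (relationMatrix_mulVec_injective h2 hΔ hx hs)]
  simp

theorem rank_eq_four_of_sum_relation (h2 : (2 : F) ≠ 0) (hΔ : 4 * A ^ 3 + 27 * B ^ 2 ≠ 0)
    (hx : Function.Injective x)
    (hs : ∀ i, (x i - g) ^ 2 * s i = 2 * ((x i * g + A) * (x i + g) + 2 * B)) :
    (Matrix.of fun i => ![2 * x i ^ 2 + 2 * x i * s i, 2 * x i - s i, 2 * x i, 2, 2, -2]).rank
      = 4 := by
  set C : Matrix (Fin 5) (Fin 6) F :=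
    Matrix.of fun i => ![2 * x i ^ 2 + 2 * x i * s i, 2 * x i - s i, 2 * x i, 2, 2, -2]
  have hsub : relationMatrix x s = C.submatrix id (Fin.castLE (by norm_num)) := by
    ext i j
    fin_cases j <;> rfl
  have hmul : C = relationMatrix x s * (!![1, 0, 0, 0, 0, 0; 0, 1, 0, 0, 0, 0; 0, 0, 1, 0, 0, 0;
      0, 0, 0, 1, 1, -1] : Matrix (Fin 4) (Fin 6) F) := by
    ext i j
    fin_cases j <;> simp [C, relationMatrix, Matrix.mul_apply, Fin.sum_univ_four]
  have hD := rank_relationMatrix h2 hΔ hx hs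
  refine le_antisymm ?_ ?_
  · calc C.rank ≤ (relationMatrix x s).rank := hmul ▸ Matrix.rank_mul_le_left _ _
      _ = 4 := hD
  · calc 4 = (relationMatrix x s).rank := hD.symm
      _ ≤ C.rank := hsub ▸ Matrix.rank_submatrix_le _ _ _

end RankFour

/-- For the elliptic curve congruential generator `x_n = x(nG ⊕ W₀)` over `𝔽_p`
(`p > 3`, nonsingular curve, `Wₙ ≠ ±G` for `n = 1,…,6`, `Wₙ ≠ 𝒪` for `n = 1,…,7`,
`x₁,…,x₇` pairwise distinct), the `5 × 6` matrix `C` with rows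
`(2x_i² + 2x_i(x_{i−1}+x_{i+1}), 2x_i − (x_{i−1}+x_{i+1}), 2x_i, 2, 2, −2)`,
`i = 2,…,6`, has rank exactly 4 over `𝔽_p`. -/
theorem stmt18 (p : ℕ) [Fact p.Prime] (hp : 3 < p)
    (A B : ZMod p)
    (hΔ : 4 * A ^ 3 + 27 * B ^ 2 ≠ 0)
    (G W₀ : (Ecurve A B).Point)
    (Wn : ℕ → (Ecurve A B).Point) (hWn : ∀ n, Wn n = n • G + W₀)
    (xs : ℕ → ZMod p) (hxs : ∀ n, xs n = xcoord (Wn n))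
    (hG : ∀ n, 1 ≤ n → n ≤ 6 → Wn n ≠ G ∧ Wn n ≠ -G)
    (hO : ∀ n, 1 ≤ n → n ≤ 7 → Wn n ≠ 0)
    (hdist : ∀ i j, 1 ≤ i → i ≤ 7 → 1 ≤ j → j ≤ 7 → i ≠ j → xs i ≠ xs j)
    (C : Matrix (Fin 5) (Fin 6) (ZMod p))
    (hC : C = Matrix.of fun i : Fin 5 =>
      ![2 * xs ((i : ℕ) + 2) ^ 2 +
          2 * xs ((i : ℕ) + 2) * (xs ((i : ℕ) + 1) + xs ((i : ℕ) + 3)),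
        2 * xs ((i : ℕ) + 2) - (xs ((i : ℕ) + 1) + xs ((i : ℕ) + 3)),
        2 * xs ((i : ℕ) + 2), 2, 2, -2]) :
    C.rank = 4 := by
  have h2 : (2 : ZMod p) ≠ 0 := Ring.two_ne_zero (by rw [ZMod.ringChar_zmod_n]; omega)
  have hstep : ∀ n, Wn (n + 1) = Wn n + G := fun n => by
    rw [hWn, hWn, succ_nsmul]
    abel
  have hG0 : G ≠ 0 := fun h => hdist 1 2 (by norm_num) (by norm_num) (by norm_num) (by norm_num)
    (by norm_num) (by rw [hxs, hxs, hstep 1, h, add_zero])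
  have hrel : ∀ n, 1 ≤ n → n ≤ 5 → (xs (n + 1) - xcoord G) ^ 2 * (xs n + xs (n + 2)) =
      2 * ((xs (n + 1) * xcoord G + A) * (xs (n + 1) + xcoord G) + 2 * B) := by
    intro n h1 h5
    have hx := xcoord_ne_of_ne_of_ne_neg (hO (n + 1) (by omega) (by omega)) hG0
      (hG (n + 1) (by omega) (by omega)).1 (hG (n + 1) (by omega) (by omega)).2
    have hsum := xcoord_add_add_xcoord_sub (hO (n + 1) (by omega) (by omega)) hG0 hx
    have hprev : Wn (n + 1) - G = Wn n := by rw [hstep, add_sub_cancel_right]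
    rw [← hstep, hprev] at hsum
    simp only [← hxs] at hsum
    rwa [add_comm (xs _)] at hsum
  subst hC
  refine rank_eq_four_of_sum_relation h2 hΔ (x := fun i => xs ((i : ℕ) + 2))
    (fun i j hij => Fin.ext ?_) (fun i => hrel ((i : ℕ) + 1) (by omega) (by omega))
  by_contra hne
  exact hdist _ _ (by omega) (by omega) (by omega) (by omega) (by omega) hij
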